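/- arXiv:1402.3775 — 2 statements merged into one kernel-verified Lean document; each statement's English description precedes it below -/
import Mathlib

section
/- There exists an absolute constant C > 0 such that for every α > 0, all integers 0 < m < N, every choice of multipliers q̂_0, …, q̂_N satisfying q̂_k = 0 for k ≤ m and 1 − m/k ≤ q̂_k < 1 for k > m, and every φ ∈ R_N, one has ‖D_x Q_m φ‖² ≤ C (‖D_x φ‖² + α² m² ‖φ‖²). -/
open MeasureTheory Real

/-- Physicists' Hermite polynomial: `ℋ_n(x) = (−1)^n e^{x²} (dⁿ/dxⁿ) e^{−x²}`. -/
noncomputable def physHermite (n : ℕ) : ℝ → ℝ :=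
  fun x => (-1 : ℝ) ^ n * Real.exp (x ^ 2) * iteratedDeriv n (fun y => Real.exp (-(y ^ 2))) x

/-- Generalized Hermite function `H_n^α(x) = (α/(2^n n! √π))^{1/2} ℋ_n(αx) e^{−α²x²/2}`. -/
noncomputable def genHermite (α : ℝ) (n : ℕ) : ℝ → ℝ :=
  fun x => Real.sqrt (α / (2 ^ n * n.factorial * Real.sqrt Real.pi)) *
    physHermite n (α * x) * Real.exp (-(α ^ 2 * x ^ 2) / 2)

/-- Integer-indexed generalized Hermite function, with the convention `H_n^α ≡ 0` for `n < 0`. -/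
noncomputable def genHermiteZ (α : ℝ) (n : ℤ) : ℝ → ℝ :=
  fun x => if 0 ≤ n then genHermite α n.toNat x else 0

/-- The operator `D_x = ∂_x + α² x`. -/
noncomputable def Dx (α : ℝ) (u : ℝ → ℝ) : ℝ → ℝ :=
  fun x => deriv u x + α ^ 2 * x * u x

/-- The Sturm–Liouville operator
`L_α(u)(x) = −e^{α²x²/2} ∂_x(e^{−α²x²} ∂_x(e^{α²x²/2} u(x)))`. -/
noncomputable def SLop (α : ℝ) (u : ℝ → ℝ) : ℝ → ℝ :=
  fun x => -(Real.exp (α ^ 2 * x ^ 2 / 2) *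
    deriv (fun y => Real.exp (-(α ^ 2 * y ^ 2)) *
      deriv (fun z => Real.exp (α ^ 2 * z ^ 2 / 2) * u z) y) x)

/-! On the Hermite basis `D_x` is a lowering operator: from `ℋ_{n+1}' = 2(n+1) ℋ_n` one gets
`D_x H_0^α = 0` and `D_x H_{n+1}^α = α √(2(n+1)) H_n^α`. The `H_n^α` are orthonormal: integrating
`2x p(x) e^{-x²}` by parts gives `∫ p' e^{-x²}`, whence
`∫ ℋ_j ℋ_{k+1} e^{-x²} = 2j ∫ ℋ_{j-1} ℋ_k e^{-x²}`. So by Parseval `‖D_x φ‖² = Σ_k 2kα² φ̂_k²` and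
`‖D_x Q_m φ‖² = Σ_k 2kα² q̂_k² φ̂_k²`. The constraints on the multipliers give `0 ≤ q̂_k < 1`, hence
`‖D_x Q_m φ‖² ≤ ‖D_x φ‖²`, and `C = 1` works. -/

open Polynomial

noncomputable def physHermitePoly : ℕ → ℝ[X]
  | 0 => 1
  | n + 1 => C 2 * X * physHermitePoly n - derivative (physHermitePoly n)

@[simp]
lemma physHermitePoly_zero : physHermitePoly 0 = 1 := rfl

lemma physHermitePoly_succ (n : ℕ) :
    physHermitePoly (n + 1) = C 2 * X * physHermitePoly n - derivative (physHermitePoly n) :=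
  rfl

lemma derivative_physHermitePoly_succ (n : ℕ) :
    derivative (physHermitePoly (n + 1)) = C (2 * ((n : ℝ) + 1)) * physHermitePoly n := by
  induction n with
  | zero => simp [physHermitePoly_succ]
  | succ n ih =>
    rw [physHermitePoly_succ (n + 1)]
    simp only [derivative_sub, derivative_mul, derivative_C, derivative_X, ih, zero_mul, zero_add,
      mul_one]
    rw [physHermitePoly_succ n]
    push_cast
    simp only [C_add, C_mul, C_1, map_ofNat]
    ring

lemma iteratedDeriv_exp_neg_sq (n : ℕ) (x : ℝ) :
    iteratedDeriv n (fun y => exp (-(y ^ 2))) x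
      = (-1) ^ n * (physHermitePoly n).eval x * exp (-(x ^ 2)) := by
  induction n generalizing x with
  | zero => simp
  | succ n ih =>
    have hexp : HasDerivAt (fun y : ℝ => exp (-(y ^ 2))) (exp (-(x ^ 2)) * (-(2 * x))) x := by
      simpa using ((hasDerivAt_pow 2 x).fun_neg).exp
    have hderiv : HasDerivAt (fun y => (-1) ^ n * (physHermitePoly n).eval y * exp (-(y ^ 2)))
        ((-1) ^ n * ((derivative (physHermitePoly n)).eval x * exp (-(x ^ 2))
          + (physHermitePoly n).eval x * (exp (-(x ^ 2)) * (-(2 * x))))) x := by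
      simpa only [mul_assoc, Pi.mul_apply] using
        (((physHermitePoly n).hasDerivAt x).mul hexp).const_mul ((-1 : ℝ) ^ n)
    rw [iteratedDeriv_succ, funext ih, hderiv.deriv, physHermitePoly_succ]
    simp only [eval_sub, eval_mul, eval_C, eval_X]
    ring

lemma physHermite_eq_eval (n : ℕ) (x : ℝ) : physHermite n x = (physHermitePoly n).eval x := by
  rw [physHermite, iteratedDeriv_exp_neg_sq]
  calc (-1) ^ n * exp (x ^ 2) * ((-1) ^ n * (physHermitePoly n).eval x * exp (-(x ^ 2)))
      = ((-1) ^ n * (-1) ^ n) * (exp (x ^ 2) * exp (-(x ^ 2))) * (physHermitePoly n).eval x := by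
        ring
    _ = (physHermitePoly n).eval x := by
        rw [← exp_add, ← mul_pow]; simp

lemma integrable_eval_mul_exp_neg_sq (p : ℝ[X]) :
    Integrable (fun x : ℝ => p.eval x * exp (-(x ^ 2))) := by
  induction p using Polynomial.induction_on' with
  | add p q hp hq =>
    simp only [eval_add, add_mul]
    exact hp.add hq
  | monomial n a =>
    have h := integrable_rpow_mul_exp_neg_mul_sq one_pos
      (lt_of_lt_of_le (by norm_num) (Nat.cast_nonneg n))
    refine (h.const_mul a).congr (Filter.Eventually.of_forall fun x => ?_)
    simp only [rpow_natCast, eval_monomial]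
    ring_nf

noncomputable def gaussIntegral : ℝ[X] →ₗ[ℝ] ℝ where
  toFun p := ∫ x, p.eval x * exp (-(x ^ 2))
  map_add' p q := by
    simp only [eval_add, add_mul]
    exact integral_add (integrable_eval_mul_exp_neg_sq p) (integrable_eval_mul_exp_neg_sq q)
  map_smul' a p := by
    simp only [eval_smul, smul_eq_mul, mul_assoc, RingHom.id_apply]
    exact integral_const_mul a _

lemma gaussIntegral_apply (p : ℝ[X]) : gaussIntegral p = ∫ x, p.eval x * exp (-(x ^ 2)) := rfl

lemma gaussIntegral_one : gaussIntegral 1 = √π := by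
  simpa [gaussIntegral_apply] using integral_gaussian 1

lemma gaussIntegral_two_X_mul (p : ℝ[X]) :
    gaussIntegral (C 2 * X * p) = gaussIntegral (derivative p) := by
  have hexp (x : ℝ) : HasDerivAt (fun y : ℝ => exp (-(y ^ 2))) (exp (-(x ^ 2)) * (-(2 * x))) x := by
    simpa using ((hasDerivAt_pow 2 x).fun_neg).exp
  have hparts := integral_mul_deriv_eq_deriv_mul_of_integrable
    (fun x _ => p.hasDerivAt x) (fun x _ => hexp x)
    ((integrable_eval_mul_exp_neg_sq (C (-2) * X * p)).congr
      (Filter.Eventually.of_forall fun x => by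
        simp only [Pi.mul_apply, eval_mul, eval_C, eval_X]; ring))
    (integrable_eval_mul_exp_neg_sq (derivative p)) (integrable_eval_mul_exp_neg_sq p)
  calc gaussIntegral (C 2 * X * p)
      = -∫ x, p.eval x * (exp (-(x ^ 2)) * (-(2 * x))) := by
        rw [gaussIntegral_apply, ← integral_neg]
        congr 1 with x
        simp only [eval_mul, eval_C, eval_X]
        ring
    _ = gaussIntegral (derivative p) := by rw [hparts, neg_neg, gaussIntegral_apply]

lemma gaussIntegral_mul_physHermitePoly_succ (p : ℝ[X]) (k : ℕ) :
    gaussIntegral (p * physHermitePoly (k + 1))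
      = gaussIntegral (derivative p * physHermitePoly k) := by
  have hsplit : p * physHermitePoly (k + 1)
      = (C 2 * X * (p * physHermitePoly k) - derivative (p * physHermitePoly k))
        + derivative p * physHermitePoly k := by
    rw [physHermitePoly_succ, derivative_mul]; ring
  rw [hsplit, map_add, map_sub, gaussIntegral_two_X_mul, sub_self, zero_add]

lemma gaussIntegral_physHermitePoly_mul (j k : ℕ) :
    gaussIntegral (physHermitePoly j * physHermitePoly k)
      = if j = k then 2 ^ k * k.factorial * √π else 0 := by
  induction k generalizing j with
  | zero =>
    cases j with
    | zero => simp [gaussIntegral_one]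
    | succ j => rw [mul_comm, gaussIntegral_mul_physHermitePoly_succ]; simp
  | succ k ih =>
    rw [gaussIntegral_mul_physHermitePoly_succ]
    cases j with
    | zero => simp
    | succ j =>
      rw [derivative_physHermitePoly_succ, mul_assoc, ← smul_eq_C_mul, map_smul, ih]
      by_cases h : j = k
      · subst h
        simp only [if_true, smul_eq_mul, Nat.factorial_succ]
        push_cast
        ring
      · simp [h]

noncomputable def genHermiteNormConst (α : ℝ) (n : ℕ) : ℝ := √(α / (2 ^ n * n.factorial * √π))

lemma genHermite_eq_eval (α : ℝ) (n : ℕ) (x : ℝ) :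
    genHermite α n x = genHermiteNormConst α n *
      (physHermitePoly n).eval (α * x) * exp (-(α ^ 2 * x ^ 2) / 2) := by
  rw [genHermite, physHermite_eq_eval, genHermiteNormConst]

lemma hasDerivAt_genHermite (α : ℝ) (n : ℕ) (x : ℝ) :
    HasDerivAt (genHermite α n)
      (genHermiteNormConst α n *
        (α * (derivative (physHermitePoly n)).eval (α * x)
          - α ^ 2 * x * (physHermitePoly n).eval (α * x)) * exp (-(α ^ 2 * x ^ 2) / 2)) x := by
  have hpoly : HasDerivAt (fun y => (physHermitePoly n).eval (α * y))
      ((derivative (physHermitePoly n)).eval (α * x) * α) x := by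
    simpa [Function.comp_def] using
      ((physHermitePoly n).hasDerivAt (α * x)).comp x ((hasDerivAt_id x).const_mul α)
  have hexp : HasDerivAt (fun y => exp (-(α ^ 2 * y ^ 2) / 2))
      (exp (-(α ^ 2 * x ^ 2) / 2) * (-(α ^ 2 * (2 * x)) / 2)) x := by
    simpa using ((((hasDerivAt_pow 2 x).const_mul (α ^ 2)).neg).div_const 2).exp
  have := (hpoly.const_mul (genHermiteNormConst α n)).mul hexp
  rw [funext (genHermite_eq_eval α n)]
  exact this.congr_deriv (by ring)

lemma Dx_genHermite (α : ℝ) (n : ℕ) (x : ℝ) :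
    Dx α (genHermite α n) x = genHermiteNormConst α n *
      (α * (derivative (physHermitePoly n)).eval (α * x)) * exp (-(α ^ 2 * x ^ 2) / 2) := by
  rw [Dx, (hasDerivAt_genHermite α n x).deriv, genHermite_eq_eval]
  ring

lemma Dx_genHermite_zero (α x : ℝ) : Dx α (genHermite α 0) x = 0 := by
  simp [Dx_genHermite]

lemma genHermiteNormConst_succ_mul (α : ℝ) (n : ℕ) :
    genHermiteNormConst α (n + 1) * (2 * ((n : ℝ) + 1))
      = √(2 * ((n : ℝ) + 1)) * genHermiteNormConst α n := by
  have hn : (0 : ℝ) ≤ 2 * ((n : ℝ) + 1) := by positivity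
  calc genHermiteNormConst α (n + 1) * (2 * ((n : ℝ) + 1))
      = √(α / (2 ^ (n + 1) * (n + 1).factorial * √π) * (2 * ((n : ℝ) + 1)) ^ 2) := by
        rw [genHermiteNormConst, sqrt_mul' _ (sq_nonneg _), sqrt_sq hn]
    _ = √(2 * ((n : ℝ) + 1) * (α / (2 ^ n * n.factorial * √π))) := by
        congr 1
        rw [Nat.factorial_succ]
        push_cast
        field_simp
        ring
    _ = √(2 * ((n : ℝ) + 1)) * genHermiteNormConst α n := sqrt_mul hn _

lemma Dx_genHermite_succ (α : ℝ) (n : ℕ) (x : ℝ) :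
    Dx α (genHermite α (n + 1)) x = α * √(2 * ((n : ℝ) + 1)) * genHermite α n x := by
  rw [Dx_genHermite, derivative_physHermitePoly_succ, genHermite_eq_eval, eval_mul, eval_C]
  linear_combination (α * (physHermitePoly n).eval (α * x) * exp (-(α ^ 2 * x ^ 2) / 2)) *
    genHermiteNormConst_succ_mul α n

lemma genHermite_mul_genHermite (α : ℝ) (j k : ℕ) (x : ℝ) :
    genHermite α j x * genHermite α k x
      = (genHermiteNormConst α j * genHermiteNormConst α k) *
        ((physHermitePoly j * physHermitePoly k).eval (α * x) * exp (-((α * x) ^ 2))) := by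
  have hexp : exp (-((α * x) ^ 2)) = exp (-(α ^ 2 * x ^ 2) / 2) * exp (-(α ^ 2 * x ^ 2) / 2) := by
    rw [← exp_add]; ring_nf
  rw [genHermite_eq_eval, genHermite_eq_eval, hexp, eval_mul]
  ring

lemma integral_genHermite_mul_genHermite {α : ℝ} (hα : 0 < α) (j k : ℕ) :
    ∫ x, genHermite α j x * genHermite α k x = if j = k then 1 else 0 := by
  simp_rw [genHermite_mul_genHermite, integral_const_mul]
  rw [Measure.integral_comp_mul_left (fun y => (physHermitePoly j * physHermitePoly k).eval y *
      exp (-(y ^ 2))), ← gaussIntegral_apply, gaussIntegral_physHermitePoly_mul]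
  split_ifs with h
  · subst h
    have hnorm : 0 < (2 : ℝ) ^ j * j.factorial * √π := by positivity
    rw [genHermiteNormConst, mul_self_sqrt (div_pos hα hnorm).le, abs_of_pos (inv_pos.mpr hα),
      smul_eq_mul]
    field_simp
  · simp

lemma integral_sum_mul_genHermite_sq {α : ℝ} (hα : 0 < α) (s : Finset ℕ) (a : ℕ → ℝ) :
    ∫ x, (∑ k ∈ s, a k * genHermite α k x) ^ 2 = ∑ k ∈ s, a k ^ 2 := by
  have hint (k j : ℕ) :
      Integrable (fun x => a k * a j * (genHermite α k x * genHermite α j x)) := by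
    refine Integrable.const_mul ?_ _
    simp_rw [genHermite_mul_genHermite]
    exact ((integrable_eval_mul_exp_neg_sq _).comp_mul_left' hα.ne').const_mul _
  simp_rw [sq, Finset.sum_mul_sum, mul_mul_mul_comm]
  rw [integral_finsetSum _ fun k _ => integrable_finsetSum _ fun j _ => hint k j]
  refine Finset.sum_congr rfl fun k hk => ?_
  rw [integral_finsetSum _ fun j _ => hint k j]
  simp_rw [integral_const_mul, integral_genHermite_mul_genHermite hα, mul_ite, mul_one, mul_zero]
  rw [Finset.sum_ite_eq s k, if_pos hk]

lemma Dx_sum_mul_genHermite (α : ℝ) (N : ℕ) (a : ℕ → ℝ) :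
    Dx α (fun y => ∑ k ∈ Finset.range (N + 1), a k * genHermite α k y)
      = fun x => ∑ j ∈ Finset.range N,
          a (j + 1) * (α * √(2 * ((j : ℝ) + 1))) * genHermite α j x := by
  funext x
  have hdiff (k : ℕ) : DifferentiableAt ℝ (fun y => a k * genHermite α k y) x :=
    ((hasDerivAt_genHermite α k x).const_mul (a k)).differentiableAt
  have hDx : Dx α (fun y => ∑ k ∈ Finset.range (N + 1), a k * genHermite α k y) x
      = ∑ k ∈ Finset.range (N + 1), a k * Dx α (genHermite α k) x := by
    simp only [Dx, deriv_fun_sum fun k _ => hdiff k, Finset.mul_sum, ← Finset.sum_add_distrib,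
      deriv_const_mul _ (hasDerivAt_genHermite α _ x).differentiableAt]
    exact Finset.sum_congr rfl fun k _ => by ring
  rw [hDx, Finset.sum_range_succ', Dx_genHermite_zero, mul_zero, add_zero]
  simp_rw [Dx_genHermite_succ]
  exact Finset.sum_congr rfl fun j _ => by ring

/-- with the viscosity operator `Q_m` acting on
`φ = Σ_{k=0}^N c_k H_k^α ∈ R_N` by `Q_m φ = Σ_{k=0}^N q̂_k c_k H_k^α`, one has
`‖D_x Q_m φ‖² ≤ C (‖D_x φ‖² + α² m² ‖φ‖²)` for an absolute constant `C > 0`. -/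
theorem DxQ_le_Dx : ∃ C : ℝ, 0 < C ∧ ∀ (α : ℝ), 0 < α → ∀ (m N : ℕ), 0 < m → m < N →
    ∀ q : ℕ → ℝ, (∀ k ≤ N, k ≤ m → q k = 0) →
    (∀ k ≤ N, m < k → 1 - (m : ℝ) / (k : ℝ) ≤ q k ∧ q k < 1) →
    ∀ (c : ℕ → ℝ) (φ Qφ : ℝ → ℝ),
    (φ = fun x => ∑ k ∈ Finset.range (N + 1), c k * genHermite α k x) →
    (Qφ = fun x => ∑ k ∈ Finset.range (N + 1), q k * c k * genHermite α k x) →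
    ∫ x : ℝ, (Dx α Qφ x) ^ 2
      ≤ C * ((∫ x : ℝ, (Dx α φ x) ^ 2) + α ^ 2 * (m : ℝ) ^ 2 * ∫ x : ℝ, (φ x) ^ 2) := by
  refine ⟨1, one_pos, fun α hα m N _ _ q hq_low hq_high c φ Qφ hφ hQφ => ?_⟩
  have hq_sq (k : ℕ) (hk : k ≤ N) : q k ^ 2 ≤ 1 := by
    rcases le_or_gt k m with hkm | hmk
    · simp [hq_low k hk hkm]
    · obtain ⟨hlow, hhigh⟩ := hq_high k hk hmk
      have : (m : ℝ) / k ≤ 1 := div_le_one_of_le₀ (by exact_mod_cast hmk.le) (by positivity)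
      exact pow_le_one₀ (by linarith) hhigh.le
  subst hφ hQφ
  rw [Dx_sum_mul_genHermite α N (fun k => q k * c k), Dx_sum_mul_genHermite,
    integral_sum_mul_genHermite_sq hα, integral_sum_mul_genHermite_sq hα,
    integral_sum_mul_genHermite_sq hα, one_mul]
  have hmodes : ∑ j ∈ Finset.range N, (q (j + 1) * c (j + 1) * (α * √(2 * ((j : ℝ) + 1)))) ^ 2
      ≤ ∑ j ∈ Finset.range N, (c (j + 1) * (α * √(2 * ((j : ℝ) + 1)))) ^ 2 := by
    refine Finset.sum_le_sum fun j hj => ?_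
    rw [mul_assoc, mul_pow]
    exact mul_le_of_le_one_left (sq_nonneg _) (hq_sq _ (Finset.mem_range.mp hj))
  have hmass : 0 ≤ α ^ 2 * (m : ℝ) ^ 2 * ∑ k ∈ Finset.range (N + 1), c k ^ 2 := by positivity
  linarith
end

section
/- Let α > 0 and N ≥ 0 an integer. For every Schwartz function φ : ℝ → ℝ, with Fourier–Hermite coefficients φ̂_n = ∫_ℝ φ H_n^α dx, the projection and differentiation operators satisfy the commutation identity P_N(∂_x φ) − ∂_x(P_N φ) = (√λ_{N+1}/2) (φ̂_N H_{N+1}^α + φ̂_{N+1} H_N^α), where λ_{N+1} = 2α²(N+1). -/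
open MeasureTheory Real

open Polynomial

noncomputable def physP : ℕ → Polynomial ℝ
  | 0 => 1
  | n+1 => C 2 * X * physP n - derivative (physP n)

lemma contDiff_gauss : ContDiff ℝ (⊤ : ℕ∞) (fun y : ℝ => Real.exp (-(y ^ 2))) := by
  fun_prop

lemma iteratedDeriv_gauss (n : ℕ) :
    iteratedDeriv n (fun y : ℝ => Real.exp (-(y ^ 2))) =
      fun x => (-1 : ℝ) ^ n * ((physP n).eval x * Real.exp (-(x ^ 2))) := by
  induction n with
  | zero => funext x; simp [physP]
  | succ n ih =>
    funext x
    rw [iteratedDeriv_succ, ih]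
    have h1 : HasDerivAt (fun x : ℝ => (-1:ℝ)^n * ((physP n).eval x * Real.exp (-(x ^ 2))))
        ((-1:ℝ)^n * (((derivative (physP n)).eval x) * Real.exp (-(x^2)) +
          (physP n).eval x * (Real.exp (-(x^2)) * (-(2*x))))) x := by
      have hp : HasDerivAt (fun x : ℝ => (physP n).eval x) ((derivative (physP n)).eval x) x :=
        (physP n).hasDerivAt x
      have he : HasDerivAt (fun x : ℝ => Real.exp (-(x ^ 2))) (Real.exp (-(x^2)) * (-(2*x))) x := by
        have : HasDerivAt (fun x : ℝ => -(x ^ 2)) (-(2*x)) x := by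
          simpa using ((hasDerivAt_pow 2 x).fun_neg)
        simpa using this.exp
      exact (hp.mul he).const_mul _
    rw [h1.deriv]
    simp only [physP, eval_sub, eval_mul, eval_C, eval_X]
    ring

lemma physHermite_eq (n : ℕ) : physHermite n = fun x => (physP n).eval x := by
  funext x
  rw [physHermite, iteratedDeriv_gauss]
  rw [show ((-1:ℝ)^n * Real.exp (x^2) * ((-1:ℝ)^n * ((physP n).eval x * Real.exp (-(x^2)))))
    = ((-1:ℝ)^n)^2 * (physP n).eval x * (Real.exp (x^2) * Real.exp (-(x^2))) by ring]
  rw [← Real.exp_add]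
  simp [← pow_mul, pow_mul']

lemma physP_deriv : ∀ n : ℕ, derivative (physP (n+1)) = C (2*(n+1) : ℝ) * physP n
  | 0 => by
    simp [physP]
  | (n+1) => by
    have ih := physP_deriv n
    have hd : derivative (physP n) = C 2 * X * physP n - physP (n+1) := by
      rw [show physP (n+1) = C 2 * X * physP n - derivative (physP n) from rfl]
      ring
    show derivative (C 2 * X * physP (n+1) - derivative (physP (n+1))) = _
    rw [derivative_sub, derivative_mul, derivative_mul, derivative_C, derivative_X, ih,
      derivative_mul, derivative_C, hd,
      show physP (n+1) = C 2 * X * physP n - derivative (physP n) from rfl, hd]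
    push_cast
    rw [show ((2:ℝ) * (n + 1 + 1)) = 2 + 2 * (n+1) by ring, C_add]
    ring

lemma physP_rec (n : ℕ) :
    physP (n+2) = C 2 * X * physP (n+1) - C (2*(n+1) : ℝ) * physP n := by
  show C 2 * X * physP (n+1) - derivative (physP (n+1)) = _
  rw [physP_deriv]

noncomputable def hc (α : ℝ) (n : ℕ) : ℝ :=
  Real.sqrt (α / (2 ^ n * n.factorial * Real.sqrt Real.pi))

lemma genHermite_eq (α : ℝ) (n : ℕ) : genHermite α n =
    fun x => hc α n * (physP n).eval (α * x) * Real.exp (-(α ^ 2 * x ^ 2) / 2) := by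
  funext x; rw [genHermite, physHermite_eq, hc]

lemma hc_succ (α : ℝ) (hα : 0 < α) (n : ℕ) :
    hc α n = Real.sqrt (2*(n+1)) * hc α (n+1) := by
  rw [hc, hc, ← Real.sqrt_mul (by positivity)]
  congr 1
  have h2 : (0:ℝ) < Real.sqrt Real.pi := Real.sqrt_pos.2 Real.pi_pos
  have h3 : ((n+1).factorial : ℝ) = (n+1) * n.factorial := by
    rw [Nat.factorial_succ]; push_cast; ring
  rw [h3]
  have hf : (0:ℝ) < (n.factorial : ℝ) := by positivity
  field_simp
  ring


lemma sqrt_half {a : ℝ} (ha : 0 ≤ a) : Real.sqrt (a/2) = Real.sqrt (2*a) / 2 := by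
  have h4 : Real.sqrt 4 = 2 := by
    rw [show (4:ℝ) = 2^2 by norm_num]
    exact Real.sqrt_sq (by norm_num)
  rw [show a/2 = (2*a)*(1/2)^2 by ring, Real.sqrt_mul (by positivity),
    Real.sqrt_sq (by norm_num : (0:ℝ) ≤ 1/2)]
  ring

lemma sqrt_half_mul {a : ℝ} (ha : 0 ≤ a) :
    Real.sqrt (a/2) * Real.sqrt (2*a) = a := by
  rw [← Real.sqrt_mul (by positivity), show a/2*(2*a) = a^2 by ring, Real.sqrt_sq ha]

lemma genHermite_hasDerivAt (α : ℝ) (hα : 0 < α) (n : ℕ) (x : ℝ) :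
    HasDerivAt (genHermite α n)
      (α * (Real.sqrt (n/2) * genHermite α (n-1) x
        - Real.sqrt ((n+1)/2) * genHermite α (n+1) x)) x := by
  have key : ∀ m : ℕ, HasDerivAt (genHermite α m)
      (hc α m * ((derivative (physP m)).eval (α*x) * α
        - α^2 * x * (physP m).eval (α*x)) * Real.exp (-(α ^ 2 * x ^ 2) / 2)) x := by
    intro m
    rw [genHermite_eq]
    have hp : HasDerivAt (fun y : ℝ => (physP m).eval (α * y))
        ((derivative (physP m)).eval (α*x) * α) x := by
      have := ((physP m).hasDerivAt (α * x)).comp x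
        ((hasDerivAt_id x).const_mul α)
      simpa [mul_comm, Function.comp_def] using this
    have he : HasDerivAt (fun y : ℝ => Real.exp (-(α ^ 2 * y ^ 2) / 2))
        (Real.exp (-(α ^ 2 * x ^ 2) / 2) * (-(α^2 * x))) x := by
      have h0 : HasDerivAt (fun y : ℝ => -(α ^ 2 * y ^ 2) / 2) (-(α^2 * x)) x := by
        have h2 : HasDerivAt (fun y : ℝ => y ^ 2) (2*x) x := by
          simpa using hasDerivAt_pow 2 x
        have := ((h2.const_mul (α^2)).fun_neg).div_const 2
        refine this.congr_deriv ?_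
        ring
      simpa using h0.exp
    have := ((hp.const_mul (hc α m)).fun_mul he)
    refine this.congr_deriv ?_
    ring
  have hcpos : ∀ m : ℕ, 0 ≤ hc α m := fun m => Real.sqrt_nonneg _
  cases n with
  | zero =>
    have h := key 0
    have A2 : Real.sqrt ((1:ℝ)/2) * hc α 1 = hc α 0 / 2 := by
      rw [sqrt_half (by norm_num : (0:ℝ) ≤ 1), hc_succ α hα 0]
      push_cast
      ring
    have hd0 : (derivative (physP 0)).eval (α*x) = 0 := by simp [physP]
    have h1 : (physP 1).eval (α*x) = 2*(α*x) := by
      show (C 2 * X * physP 0 - derivative (physP 0)).eval (α*x) = _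
      simp [physP]
    have h0 : (physP 0).eval (α*x) = 1 := by simp [physP]
    convert h using 1
    rw [genHermite_eq, genHermite_eq]
    beta_reduce
    rw [hd0, h1, h0]
    push_cast
    simp only [zero_div, Real.sqrt_zero, zero_mul]
    rw [show ((0:ℝ) + 1)/2 = 1/2 by norm_num]
    linear_combination (-(α : ℝ) * (2*(α*x)) * Real.exp (-(α ^ 2 * x ^ 2) / 2)) * A2
  | succ n =>
    have h := key (n+1)
    have hc1 : hc α n = Real.sqrt (2*((n:ℝ)+1)) * hc α (n+1) := by
      have := hc_succ α hα n; push_cast at this ⊢; exact this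
    have hc2 : hc α (n+1) = Real.sqrt (2*((n:ℝ)+2)) * hc α (n+2) := by
      have := hc_succ α hα (n+1); push_cast at this ⊢; convert this using 3 <;> ring
    have A1 : Real.sqrt (((n:ℝ)+1)/2) * hc α n = ((n:ℝ)+1) * hc α (n+1) := by
      rw [hc1, ← mul_assoc, sqrt_half_mul (by positivity)]
    have A2 : Real.sqrt (((n:ℝ)+2)/2) * hc α (n+2) = hc α (n+1) / 2 := by
      rw [sqrt_half (by positivity), hc2]; ring
    have hd : (derivative (physP (n+1))).eval (α*x) = 2*((n:ℝ)+1) * (physP n).eval (α*x) := by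
      rw [physP_deriv]; simp
    have hr : (physP (n+2)).eval (α*x)
        = 2*(α*x)*(physP (n+1)).eval (α*x) - 2*((n:ℝ)+1)*(physP n).eval (α*x) := by
      rw [physP_rec]; simp
    simp only [Nat.succ_sub_one]
    convert h using 1
    rw [genHermite_eq α n, genHermite_eq α (n+2)]
    beta_reduce
    rw [hd, hr]
    push_cast
    rw [show ((n:ℝ) + 1 + 1) / 2 = ((n:ℝ)+2)/2 by ring]
    linear_combination
      ((α : ℝ) * (physP n).eval (α*x) * Real.exp (-(α ^ 2 * x ^ 2) / 2)) * A1
      - ((α : ℝ) * (2*(α*x)*(physP (n+1)).eval (α*x) - 2*((n:ℝ)+1)*(physP n).eval (α*x))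
          * Real.exp (-(α ^ 2 * x ^ 2) / 2)) * A2

lemma pow_le_factorial_mul_exp {t : ℝ} (ht : 0 ≤ t) (k : ℕ) :
    t ^ k ≤ k.factorial * Real.exp t := by
  have h1 : t ^ k / k.factorial ≤ Real.exp t := by
    refine le_trans ?_ (Real.sum_le_exp_of_nonneg ht (k+1))
    exact Finset.single_le_sum (f := fun i => t ^ i / (i.factorial : ℝ))
      (fun i _ => by positivity) (Finset.self_mem_range_succ k)
  have hf : (0:ℝ) < k.factorial := by positivity
  rw [div_le_iff₀ hf] at h1
  linarith [h1]

lemma abs_pow_mul_gauss_le (k : ℕ) (y : ℝ) :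
    |y| ^ k * Real.exp (-(y^2)/2) ≤ 1 + k.factorial * 2^k := by
  have he : Real.exp (-(y^2)/2) ≤ 1 := by
    rw [Real.exp_le_one_iff]
    have : (0:ℝ) ≤ y^2 := sq_nonneg y
    linarith
  have hepos : (0:ℝ) < Real.exp (-(y^2)/2) := Real.exp_pos _
  have key : (y^2/2) ^ k ≤ k.factorial * Real.exp (y^2/2) :=
    pow_le_factorial_mul_exp (by positivity) k
  have h2 : (y^2)^k * Real.exp (-(y^2)/2) ≤ k.factorial * 2^k := by
    have hexp : Real.exp (y^2/2) * Real.exp (-(y^2)/2) = 1 := by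
      rw [← Real.exp_add]; ring_nf; exact Real.exp_zero
    have hkey2 : (y^2)^k ≤ k.factorial * 2^k * Real.exp (y^2/2) := by
      have : (y^2)^k = (y^2/2)^k * 2^k := by
        rw [div_pow]; field_simp
      rw [this]
      calc (y^2/2)^k * 2^k ≤ (k.factorial * Real.exp (y^2/2)) * 2^k :=
            mul_le_mul_of_nonneg_right key (by positivity)
        _ = k.factorial * 2^k * Real.exp (y^2/2) := by ring
    calc (y^2)^k * Real.exp (-(y^2)/2)
        ≤ (k.factorial * 2^k * Real.exp (y^2/2)) * Real.exp (-(y^2)/2) :=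
          mul_le_mul_of_nonneg_right hkey2 hepos.le
      _ = k.factorial * 2^k * (Real.exp (y^2/2) * Real.exp (-(y^2)/2)) := by ring
      _ = k.factorial * 2^k := by rw [hexp, mul_one]
  have hfk : (0:ℝ) ≤ (k.factorial : ℝ) * 2^k := by positivity
  rcases le_total (|y|) 1 with h | h
  · have h3 : |y|^k * Real.exp (-(y^2)/2) ≤ 1 :=
      mul_le_one₀ (pow_le_one₀ (abs_nonneg y) h) hepos.le he
    linarith
  · have h4 : |y|^k ≤ (y^2)^k := by
      apply pow_le_pow_left₀ (abs_nonneg y)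
      nlinarith [abs_nonneg y, sq_abs y]
    have h5 : |y|^k * Real.exp (-(y^2)/2) ≤ (y^2)^k * Real.exp (-(y^2)/2) :=
      mul_le_mul_of_nonneg_right h4 hepos.le
    linarith

lemma poly_gauss_bound (p : Polynomial ℝ) :
    ∃ C, ∀ y : ℝ, |p.eval y| * Real.exp (-(y^2)/2) ≤ C := by
  refine ⟨∑ k ∈ Finset.range (p.natDegree + 1), |p.coeff k| * (1 + k.factorial * 2^k), fun y => ?_⟩
  have h1 : |p.eval y| ≤ ∑ k ∈ Finset.range (p.natDegree + 1), |p.coeff k| * |y|^k := by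
    rw [Polynomial.eval_eq_sum_range]
    refine le_trans (Finset.abs_sum_le_sum_abs _ _) ?_
    apply Finset.sum_le_sum
    intro k _
    rw [abs_mul, abs_pow]
  have hepos : (0:ℝ) < Real.exp (-(y^2)/2) := Real.exp_pos _
  calc |p.eval y| * Real.exp (-(y^2)/2)
      ≤ (∑ k ∈ Finset.range (p.natDegree + 1), |p.coeff k| * |y|^k) * Real.exp (-(y^2)/2) :=
        mul_le_mul_of_nonneg_right h1 hepos.le
    _ = ∑ k ∈ Finset.range (p.natDegree + 1), |p.coeff k| * (|y|^k * Real.exp (-(y^2)/2)) := by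
        rw [Finset.sum_mul]; congr 1; funext k; ring
    _ ≤ ∑ k ∈ Finset.range (p.natDegree + 1), |p.coeff k| * (1 + k.factorial * 2^k) := by
        apply Finset.sum_le_sum
        intro k _
        exact mul_le_mul_of_nonneg_left (abs_pow_mul_gauss_le k y) (abs_nonneg _)

lemma genHermite_bound (α : ℝ) (n : ℕ) : ∃ C, ∀ x : ℝ, ‖genHermite α n x‖ ≤ C := by
  obtain ⟨C, hC⟩ := poly_gauss_bound (physP n)
  refine ⟨|hc α n| * C, fun x => ?_⟩
  rw [genHermite_eq]
  have : ‖hc α n * (physP n).eval (α * x) * Real.exp (-(α ^ 2 * x ^ 2) / 2)‖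
      = |hc α n| * (|(physP n).eval (α * x)| * Real.exp (-((α*x)^2)/2)) := by
    rw [Real.norm_eq_abs, abs_mul, abs_mul, mul_assoc]
    congr 2
    rw [abs_of_pos (Real.exp_pos _)]
    congr 1
    ring
  rw [this]
  exact mul_le_mul_of_nonneg_left (hC (α*x)) (abs_nonneg _)

lemma genHermite_continuous (α : ℝ) (n : ℕ) : Continuous (genHermite α n) := by
  rw [genHermite_eq]
  fun_prop

lemma integrable_schwartz_mul_genHermite (α : ℝ) (n : ℕ) (f : SchwartzMap ℝ ℝ) :
    Integrable (fun y => f y * genHermite α n y) := by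
  obtain ⟨C, hC⟩ := genHermite_bound α n
  have h := (f.integrable (μ := volume)).bdd_mul
    (genHermite_continuous α n).aestronglyMeasurable (ae_of_all _ hC)
  have : (fun y => genHermite α n y * f y) = fun y => f y * genHermite α n y := by
    funext y; ring
  rw [← this]
  exact h

lemma coeff_deriv (α : ℝ) (hα : 0 < α) (φ : SchwartzMap ℝ ℝ) (n : ℕ) :
    ∫ y : ℝ, deriv (⇑φ) y * genHermite α n y
      = α * (Real.sqrt ((n+1)/2) * (∫ y : ℝ, φ y * genHermite α (n+1) y)
        - Real.sqrt (n/2) * (∫ y : ℝ, φ y * genHermite α (n-1) y)) := by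
  set u := genHermite α n with hu_def
  set u' : ℝ → ℝ := fun x => α * (Real.sqrt (n/2) * genHermite α (n-1) x
    - Real.sqrt ((n+1)/2) * genHermite α (n+1) x) with hu'_def
  have hu : ∀ x, HasDerivAt u (u' x) x := fun x => genHermite_hasDerivAt α hα n x
  have hv : ∀ x, HasDerivAt (⇑φ) (deriv (⇑φ) x) x := fun x =>
    (φ.differentiable.differentiableAt).hasDerivAt
  have hderiv_eq : deriv (⇑φ) = ⇑(SchwartzMap.derivCLM ℝ ℝ φ) := by
    funext y
    rw [SchwartzMap.derivCLM_apply]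
  have huv' : Integrable (u * deriv (⇑φ)) := by
    have := integrable_schwartz_mul_genHermite α n (SchwartzMap.derivCLM ℝ ℝ φ)
    have heq : (u * deriv (⇑φ)) = fun y => (SchwartzMap.derivCLM ℝ ℝ φ) y * genHermite α n y := by
      funext y
      simp only [Pi.mul_apply, hu_def, hderiv_eq]
      ring
    rw [heq]
    exact this
  have hint1 := integrable_schwartz_mul_genHermite α (n-1) φ
  have hint2 := integrable_schwartz_mul_genHermite α (n+1) φ
  have hu'v : Integrable (u' * ⇑φ) := by
    have heq : (u' * ⇑φ) = fun y =>
        (α * Real.sqrt (n/2)) * (φ y * genHermite α (n-1) y)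
        - (α * Real.sqrt ((n+1)/2)) * (φ y * genHermite α (n+1) y) := by
      funext y
      simp only [hu'_def, Pi.mul_apply]
      ring
    rw [heq]
    exact (hint1.const_mul _).sub (hint2.const_mul _)
  have huv : Integrable (u * ⇑φ) := by
    have heq : (u * ⇑φ) = fun y => φ y * genHermite α n y := by
      funext y
      simp only [Pi.mul_apply, hu_def]
      ring
    rw [heq]
    exact integrable_schwartz_mul_genHermite α n φ
  have key := integral_mul_deriv_eq_deriv_mul_of_integrable (fun x _ => hu x) (fun x _ => hv x) huv' hu'v huv
  have hL : (∫ x : ℝ, u x * deriv (⇑φ) x) = ∫ y : ℝ, deriv (⇑φ) y * genHermite α n y := by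
    congr 1
    funext y
    simp only [hu_def]
    ring
  have hR : (∫ x : ℝ, u' x * φ x)
      = (α * Real.sqrt (n/2)) * (∫ y : ℝ, φ y * genHermite α (n-1) y)
        - (α * Real.sqrt ((n+1)/2)) * (∫ y : ℝ, φ y * genHermite α (n+1) y) := by
    have heq : (fun x => u' x * φ x) = fun y =>
        (α * Real.sqrt (n/2)) * (φ y * genHermite α (n-1) y)
        - (α * Real.sqrt ((n+1)/2)) * (φ y * genHermite α (n+1) y) := by
      funext y
      simp only [hu'_def]
      ring
    rw [heq, integral_sub (hint1.const_mul _) (hint2.const_mul _),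
      integral_const_mul, integral_const_mul]
  rw [hL, hR] at key
  rw [key]
  ring

/-- commutation identity for the projection `P_N` and differentiation,
for a Schwartz function `φ`:
`P_N(∂_x φ) − ∂_x(P_N φ) = (√λ_{N+1}/2)(φ̂_N H_{N+1}^α + φ̂_{N+1} H_N^α)`, `λ_{N+1} = 2α²(N+1)`. -/

theorem projection_deriv_commutator (α : ℝ) (hα : 0 < α) (N : ℕ)
    (φ : SchwartzMap ℝ ℝ) (x : ℝ) :
    (∑ n ∈ Finset.range (N + 1), (∫ y : ℝ, deriv (⇑φ) y * genHermite α n y) * genHermite α n x)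
        - deriv (fun z => ∑ n ∈ Finset.range (N + 1),
            (∫ y : ℝ, φ y * genHermite α n y) * genHermite α n z) x
      = Real.sqrt (2 * α ^ 2 * (N + 1)) / 2 *
          ((∫ y : ℝ, φ y * genHermite α N y) * genHermite α (N + 1) x
            + (∫ y : ℝ, φ y * genHermite α (N + 1) y) * genHermite α N x) := by
  classical
  let b : ℕ → ℝ := fun n => ∫ y : ℝ, φ y * genHermite α n y
  let F : ℕ → ℝ := fun m => α * Real.sqrt ((m:ℝ)/2) *
    (b (m-1) * genHermite α m x + b m * genHermite α (m-1) x)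
  have hds : deriv (fun z => ∑ n ∈ Finset.range (N + 1), b n * genHermite α n z) x
      = ∑ n ∈ Finset.range (N + 1), b n * (α * (Real.sqrt ((n:ℝ)/2) * genHermite α (n-1) x
          - Real.sqrt (((n:ℝ)+1)/2) * genHermite α (n+1) x)) := by
    have h : HasDerivAt (fun z => ∑ n ∈ Finset.range (N + 1), b n * genHermite α n z)
        (∑ n ∈ Finset.range (N + 1), b n * (α * (Real.sqrt ((n:ℝ)/2) * genHermite α (n-1) x
          - Real.sqrt (((n:ℝ)+1)/2) * genHermite α (n+1) x))) x := by
      apply HasDerivAt.fun_sum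
      intro n _
      exact (genHermite_hasDerivAt α hα n x).const_mul (b n)
    exact h.deriv
  rw [hds, ← Finset.sum_sub_distrib]
  have hterm : ∀ n ∈ Finset.range (N + 1),
      (∫ y : ℝ, deriv (⇑φ) y * genHermite α n y) * genHermite α n x
        - b n * (α * (Real.sqrt ((n:ℝ)/2) * genHermite α (n-1) x
          - Real.sqrt (((n:ℝ)+1)/2) * genHermite α (n+1) x))
      = F (n+1) - F n := by
    intro n _
    rw [coeff_deriv α hα φ n]
    show _ = α * Real.sqrt ((↑(n+1):ℝ)/2) *
        (b ((n+1)-1) * genHermite α (n+1) x + b (n+1) * genHermite α ((n+1)-1) x)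
      - α * Real.sqrt ((n:ℝ)/2) *
        (b (n-1) * genHermite α n x + b n * genHermite α (n-1) x)
    simp only [Nat.add_sub_cancel]
    push_cast
    ring
  rw [Finset.sum_congr rfl hterm, Finset.sum_range_sub F]
  have hF0 : F 0 = 0 := by
    simp [F]
  rw [hF0, sub_zero]
  show α * Real.sqrt ((↑(N+1):ℝ)/2) *
      (b ((N+1)-1) * genHermite α (N+1) x + b (N+1) * genHermite α ((N+1)-1) x) = _
  simp only [Nat.add_sub_cancel]
  have h1 : Real.sqrt (2 * α ^ 2 * ((N:ℝ) + 1)) = α * Real.sqrt (2*((N:ℝ)+1)) := by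
    rw [show 2*α^2*((N:ℝ)+1) = α^2 * (2*((N:ℝ)+1)) by ring,
      Real.sqrt_mul (sq_nonneg α), Real.sqrt_sq hα.le]
  have h2 : Real.sqrt ((↑(N+1):ℝ)/2) = Real.sqrt (2*((N:ℝ)+1)) / 2 := by
    push_cast
    exact sqrt_half (by positivity)
  rw [h1, h2]
  show _ = α * Real.sqrt (2 * (↑N + 1)) / 2 * (b N * genHermite α (N + 1) x
    + b (N+1) * genHermite α N x)
  ring
end
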